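/- arXiv:1508.07438 — 10 statements merged into one kernel-verified Lean document; each statement's English description precedes it below -/
import Mathlib

section
/- For positive integers z_2, z_3 with z_2 ≥ 2, the partial sum S_3 = 1 + 1/z_2 + 1/(z_2^2 z_3) equals the value of the finite continued fraction [1; z_2 - 1, 1, z_3 - 1, z_2], i.e. S_3 = (z_2^2 z_3 + z_2 z_3 + 1)/(z_2^2 z_3). -/
/-- Value of a finite continued fraction `[a₀; a₁, …, aₙ]` given as a list. -/
noncomputable def cf : List ℝ → ℝ
  | [] => 0
  | a :: l => a + 1 / cf l

@[simp]
lemma cf_cons (a : ℝ) (l : List ℝ) : cf (a :: l) = a + 1 / cf l := rfl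

@[simp]
lemma cf_singleton (a : ℝ) : cf [a] = a := by simp [cf]

-- Singularization of a partial quotient `1` of a continued fraction.
lemma cf_sub_one_cons_one_cons (x : ℝ) {l : List ℝ} (h₀ : cf l ≠ 0) (h₁ : cf l + 1 ≠ 0) :
    cf ((x - 1) :: 1 :: l) = x - 1 / (cf l + 1) := by
  simp only [cf_cons]
  field_simp
  ring

lemma cf_one_sub_one_one_sub_one (z w : ℝ) (hz : z ≠ 0) (hw : w ≠ 0)
    (h₁ : z * w + 1 ≠ 0) (h₂ : z * (w - 1) + 1 ≠ 0) :
    cf [1, z - 1, 1, w - 1, z] = 1 + 1 / z + 1 / (z ^ 2 * w) := by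
  have htail : cf [w - 1, z] = (z * (w - 1) + 1) / z := by
    rw [cf_cons, cf_singleton]
    field_simp
  have htail_add_one : cf [w - 1, z] + 1 = (z * w + 1) / z := by
    rw [htail]
    field_simp
    ring
  rw [cf_cons, cf_sub_one_cons_one_cons z (by rw [htail]; positivity) (by rw [htail_add_one]; positivity),
    htail_add_one]
  field_simp
  ring

theorem stmt3 (z2 z3 : ℕ) (h2 : 2 ≤ z2) (h3 : 1 ≤ z3) :
    1 + 1 / (z2 : ℝ) + 1 / ((z2 : ℝ) ^ 2 * z3)
      = cf [1, (z2 : ℝ) - 1, 1, (z3 : ℝ) - 1, (z2 : ℝ)] ∧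
    1 + 1 / (z2 : ℝ) + 1 / ((z2 : ℝ) ^ 2 * z3)
      = ((z2 : ℝ) ^ 2 * z3 + (z2 : ℝ) * z3 + 1) / ((z2 : ℝ) ^ 2 * z3) := by
  have hz : (z2 : ℝ) ≠ 0 := by exact_mod_cast (by omega : z2 ≠ 0)
  have hw : (z3 : ℝ) ≠ 0 := by exact_mod_cast (by omega : z3 ≠ 0)
  have hw₁ : (0 : ℝ) ≤ z3 - 1 := sub_nonneg.2 (by exact_mod_cast h3)
  refine ⟨(cf_one_sub_one_one_sub_one _ _ hz hw (by positivity) (by positivity)).symm, ?_⟩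
  field_simp
end

section
/- For positive integers z_2 ≥ 3, z_3 ≥ 2, z_4 ≥ 2, the partial sum S_4 = 1 + 1/z_2 + 1/(z_2^2 z_3) + 1/(z_2^4 z_3^2 z_4) equals the value of the finite continued fraction [1; z_2−1, 1, z_3−1, z_2, z_4−1, 1, z_2−1, z_3−1, 1, z_2−1]. -/
/-! Euler's continuants `K` turn a finite continued fraction with positive partial quotients
into a single quotient, `[a₀; a₁, …, aₙ] = K(a₀, …, aₙ) / K(a₁, …, aₙ)`. For the list at hand
(obtained from `[1; z₂ - 1, 1] = 1 + 1/z₂` by folding twice) the two continuants are the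
polynomials `z₂⁴z₃²z₄ · S₄` and `z₂⁴z₃²z₄`. -/

def continuant {R : Type*} [Semiring R] : List R → R
  | [] => 1
  | [a] => a
  | a :: b :: l => a * continuant (b :: l) + continuant l

theorem continuant_pos {R : Type*} [Semiring R] [PartialOrder R] [IsStrictOrderedRing R]
    {l : List R} (h : ∀ x ∈ l, 0 < x) : 0 < continuant l := by
  induction l using continuant.induct with
  | case1 => simp [continuant]
  | case2 a => simpa [continuant] using h
  | case3 a b l ihbl ihl =>
    simp only [List.mem_cons, forall_eq_or_imp] at h ihbl ihl
    rw [continuant]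
    exact add_pos (mul_pos h.1 (ihbl h.2)) (ihl h.2.2)

theorem cf_cons_eq_continuant_div (a : ℝ) {l : List ℝ} (h : ∀ x ∈ l, 0 < x) :
    cf (a :: l) = continuant (a :: l) / continuant l := by
  induction l generalizing a with
  | nil => simp [cf, continuant]
  | cons b l ih =>
    have hbl : continuant (b :: l) ≠ 0 := (continuant_pos h).ne'
    rw [cf, ih b fun x hx => h x (List.mem_cons_of_mem b hx), one_div_div, continuant]
    field_simp

theorem stmt4 (z2 z3 z4 : ℕ) (h2 : 3 ≤ z2) (h3 : 2 ≤ z3) (h4 : 2 ≤ z4) :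
    1 + 1 / (z2 : ℝ) + 1 / ((z2 : ℝ) ^ 2 * z3) + 1 / ((z2 : ℝ) ^ 4 * (z3 : ℝ) ^ 2 * z4)
      = cf [1, (z2 : ℝ) - 1, 1, (z3 : ℝ) - 1, (z2 : ℝ), (z4 : ℝ) - 1, 1,
            (z2 : ℝ) - 1, (z3 : ℝ) - 1, 1, (z2 : ℝ) - 1] := by
  have ha : (3 : ℝ) ≤ z2 := by exact_mod_cast h2
  have hb : (2 : ℝ) ≤ z3 := by exact_mod_cast h3
  have hc : (2 : ℝ) ≤ z4 := by exact_mod_cast h4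
  generalize (z2 : ℝ) = a at *
  generalize (z3 : ℝ) = b at *
  generalize (z4 : ℝ) = c at *
  have hpos : ∀ x ∈ [a - 1, 1, b - 1, a, c - 1, 1, a - 1, b - 1, 1, a - 1], 0 < x := by
    simp only [List.mem_cons, List.not_mem_nil, or_false]
    rintro x (rfl | rfl | rfl | rfl | rfl | rfl | rfl | rfl | rfl | rfl) <;> linarith
  have hden : continuant [a - 1, 1, b - 1, a, c - 1, 1, a - 1, b - 1, 1, a - 1]
      = a ^ 4 * b ^ 2 * c := by
    simp only [continuant]; ring
  have hnum : continuant [1, a - 1, 1, b - 1, a, c - 1, 1, a - 1, b - 1, 1, a - 1]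
      = a ^ 4 * b ^ 2 * c + a ^ 3 * b ^ 2 * c + a ^ 2 * b * c + 1 := by
    simp only [continuant]; ring
  rw [cf_cons_eq_continuant_div 1 hpos, hnum, hden]
  have : a ≠ 0 := by positivity
  have : b ≠ 0 := by positivity
  have : c ≠ 0 := by positivity
  field_simp
end

section
/- For the sequence defined by x_0 = x_1 = 1 and x_{n+2} x_n = 3 x_{n+1}^3, every term is x_n = 3^{s_n} where s_n = ((5−√5)/10)·((3+√5)/2)^n + ((5+√5)/10)·((3−√5)/2)^n − 1; equivalently, (s_n) satisfies s_0 = s_1 = 0 and s_{n+2} = 3 s_{n+1} − s_n + 1. -/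
/-!
Taking logarithms to base 3 turns `x (n + 2) * x n = 3 * x (n + 1) ^ 3` into the linear
recurrence of `s`, so `x = 3 ^ s` by two-step induction. Shifting by one, `s + 1` satisfies the
homogeneous recurrence `t (n + 2) = 3 t (n + 1) - t n`, whose characteristic roots are
`(3 ± √5) / 2`; the closed form is the Binet formula fitted to `t 0 = t 1 = 1`.
-/

theorem eq_pow_of_mul_eq_mul_pow {x s : ℕ → ℕ} {b k : ℕ} (hb : 0 < b)
    (hx0 : x 0 = b ^ s 0) (hx1 : x 1 = b ^ s 1)
    (hrec : ∀ n, x (n + 2) * x n = b * x (n + 1) ^ k)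
    (hsrec : ∀ n, s (n + 2) + s n = k * s (n + 1) + 1) :
    ∀ n, x n = b ^ s n := by
  intro n
  induction n using Nat.twoStepInduction with
  | zero => exact hx0
  | one => exact hx1
  | more n ih₀ ih₁ =>
    refine Nat.eq_of_mul_eq_mul_right (pow_pos hb (s n)) ?_
    calc x (n + 2) * b ^ s n = b * (b ^ s (n + 1)) ^ k := by rw [← ih₀, ← ih₁, hrec]
      _ = b ^ (s (n + 2) + s n) := by rw [hsrec, ← pow_mul, pow_succ]; ring
      _ = b ^ s (n + 2) * b ^ s n := pow_add b _ _

theorem eq_binet_of_recurrence {R : Type*} [CommRing R] {t : ℕ → R} {p q r₁ r₂ A B : R}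
    (hr₁ : r₁ ^ 2 = p * r₁ - q) (hr₂ : r₂ ^ 2 = p * r₂ - q)
    (ht : ∀ n, t (n + 2) = p * t (n + 1) - q * t n)
    (h0 : t 0 = A + B) (h1 : t 1 = A * r₁ + B * r₂) :
    ∀ n, t n = A * r₁ ^ n + B * r₂ ^ n := by
  intro n
  induction n using Nat.twoStepInduction with
  | zero => simpa using h0
  | one => simpa using h1
  | more n ih₀ ih₁ =>
    rw [ht, ih₀, ih₁]
    linear_combination (-A * r₁ ^ n) * hr₁ - B * r₂ ^ n * hr₂

theorem stmt8 (x s : ℕ → ℕ) (hx0 : x 0 = 1) (hx1 : x 1 = 1)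
    (hrec : ∀ n, x (n + 2) * x n = 3 * x (n + 1) ^ 3)
    (hs0 : s 0 = 0) (hs1 : s 1 = 0)
    (hsrec : ∀ n, s (n + 2) + s n = 3 * s (n + 1) + 1) :
    ∀ n, x n = 3 ^ s n ∧
      (s n : ℝ) = (5 - Real.sqrt 5) / 10 * ((3 + Real.sqrt 5) / 2) ^ n
        + (5 + Real.sqrt 5) / 10 * ((3 - Real.sqrt 5) / 2) ^ n - 1 := by
  have h5 : Real.sqrt 5 ^ 2 = 5 := Real.sq_sqrt (by norm_num)
  have hx : ∀ n, x n = 3 ^ s n :=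
    eq_pow_of_mul_eq_mul_pow (by norm_num) (by simp [hx0, hs0]) (by simp [hx1, hs1]) hrec hsrec
  have hbinet : ∀ n, (s n + 1 : ℝ) = (5 - Real.sqrt 5) / 10 * ((3 + Real.sqrt 5) / 2) ^ n
      + (5 + Real.sqrt 5) / 10 * ((3 - Real.sqrt 5) / 2) ^ n := by
    refine eq_binet_of_recurrence (p := 3) (q := 1) ?_ ?_ (fun n => ?_) ?_ ?_
    · linear_combination h5 / 4
    · linear_combination h5 / 4
    · have h : (s (n + 2) : ℝ) + s n = 3 * s (n + 1) + 1 := by exact_mod_cast hsrec n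
      linear_combination h
    · push_cast [hs0]; ring
    · push_cast [hs1]; linear_combination h5 / 10
  exact fun n => ⟨hx n, by linear_combination hbinet n⟩
end

section
/- Let d_1 ≥ 3 and G a polynomial with non-negative integer coefficients, G(0) ≠ 0 and G(1) ≥ 3. Then the sequence defined by x_0 = x_1 = 1 and x_{n+2} x_n = x_{n+1}^{d_1} G(x_{n+1}) consists of positive integers and satisfies x_n^2 | x_{n+1} for all n ≥ 0. -/
lemma evalpos9 (G : Polynomial ℤ) (h : ∀ i, 0 ≤ G.coeff i) (h0 : G.eval 0 ≠ 0)
    (k : ℤ) (hk : 0 ≤ k) : 0 < G.eval k := by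
  rw [Polynomial.eval_eq_sum_range]
  apply Finset.sum_pos'
  · intro i _
    exact mul_nonneg (h i) (pow_nonneg hk i)
  · refine ⟨0, Finset.mem_range.2 (Nat.succ_pos _), ?_⟩
    simp only [pow_zero, mul_one]
    have h0' : G.coeff 0 ≠ 0 := by rwa [Polynomial.coeff_zero_eq_eval_zero]
    exact lt_of_le_of_ne (h 0) (Ne.symm h0')

theorem stmt9 (d1 : ℕ) (hd1 : 3 ≤ d1) (G : Polynomial ℤ)
    (hGcoeff : ∀ i, 0 ≤ G.coeff i) (hG0 : G.eval 0 ≠ 0) (hG1 : 3 ≤ G.eval 1)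
    (x : ℕ → ℚ) (hx0 : x 0 = 1) (hx1 : x 1 = 1)
    (hrec : ∀ n, x (n + 2) * x n
      = x (n + 1) ^ d1 * (G.map (Int.castRingHom ℚ)).eval (x (n + 1))) :
    ∀ n, (∃ k : ℤ, 0 < k ∧ x n = (k : ℚ)) ∧ ∃ t : ℤ, x (n + 1) = x n ^ 2 * (t : ℚ) := by
  obtain ⟨e, rfl⟩ : ∃ e, d1 = 3 + e := ⟨d1 - 3, by omega⟩
  have key : ∀ n, ∃ a t : ℤ, 0 < a ∧ 0 < t ∧ x n = (a : ℚ) ∧ x (n + 1) = (a : ℚ) ^ 2 * t := by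
    intro n
    induction n with
    | zero => exact ⟨1, 1, one_pos, one_pos, by simp [hx0], by simp [hx1]⟩
    | succ m ih =>
      obtain ⟨a, t, ha, ht, hxa, hxb⟩ := ih
      set b : ℤ := a ^ 2 * t with hbdef
      have hb : 0 < b := by positivity
      have hxb' : x (m + 1) = (b : ℚ) := by rw [hxb, hbdef]; push_cast; ring
      have hg : 0 < G.eval b := evalpos9 G hGcoeff hG0 b hb.le
      have ha' : (a : ℚ) ≠ 0 := Int.cast_ne_zero.mpr ha.ne'
      have hcast : (G.map (Int.castRingHom ℚ)).eval ((b : ℤ) : ℚ) = ((G.eval b : ℤ) : ℚ) := by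
        rw [Polynomial.eval_map]
        exact (Polynomial.eval₂_at_intCast _ _).trans (by simp)
      have hrecm := hrec m
      rw [hxa, hxb', hcast] at hrecm
      have hx2 : x (m + 2) = (b : ℚ) ^ (3 + e) * ((G.eval b : ℤ) : ℚ) / a := by
        rw [eq_div_iff ha']; exact hrecm
      refine ⟨b, a ^ (2 * e + 1) * t ^ (e + 1) * G.eval b, hb, by positivity, hxb', ?_⟩
      have hZ : (b : ℤ) ^ 2 * (a ^ (2 * e + 1) * t ^ (e + 1) * G.eval b) * a
          = b ^ (3 + e) * G.eval b := by
        rw [hbdef]; ring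
      have hZQ := congrArg (Int.cast : ℤ → ℚ) hZ
      push_cast at hZQ
      rw [hx2, div_eq_iff ha']
      push_cast
      linarith [hZQ]
  intro n
  obtain ⟨a, t, ha, ht, hxa, hxb⟩ := key n
  exact ⟨⟨a, ha, hxa⟩, ⟨t, by rw [hxb, hxa]⟩⟩
end

section
/- Under the hypotheses of the previous setup (x_0 = x_1 = 1, x_{n+2} x_n = x_{n+1}^{d_1} G(x_{n+1}) with d_1 ≥ 3, G ∈ ℤ_{≥0}[x], G(0) ≠ 0, G(1) ≥ 3), the ratios z_n = x_n / x_{n-1}^2 satisfy z_n ≥ 3 for all n ≥ 2. -/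
/-!
By induction, `1 ≤ xₙ ≤ xₙ₊₁` for all `n`. Given this, and since `G` has non-negative coefficients
so that `G(t) ≥ G(1) ≥ 3` for `t ≥ 1`, the recurrence gives
`xₙ₊₂ xₙ = xₙ₊₁^d₁ G(xₙ₊₁) ≥ 3 xₙ₊₁³ ≥ 3 xₙ₊₁² xₙ`, i.e. `zₙ₊₂ ≥ 3`; the same inequality
`xₙ₊₂ ≥ 3 xₙ₊₁² ≥ xₙ₊₁` carries the induction.
-/

open Polynomial

theorem Polynomial.eval_le_eval_of_coeff_nonneg {R : Type*} [CommSemiring R] [PartialOrder R]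
    [IsOrderedRing R] {p : R[X]} (hp : ∀ i, 0 ≤ p.coeff i) {a b : R} (ha : 0 ≤ a)
    (hab : a ≤ b) : p.eval a ≤ p.eval b := by
  rw [eval_eq_sum_range, eval_eq_sum_range]
  exact Finset.sum_le_sum fun i _ ↦
    mul_le_mul_of_nonneg_left (pow_le_pow_left₀ ha hab i) (hp i)

section Recurrence

variable {R : Type*} [Field R] [LinearOrder R] [IsStrictOrderedRing R]

theorem mul_sq_le_of_mul_eq_pow_mul {a b c v k : R} {d : ℕ} (ha : 1 ≤ a) (hab : a ≤ b)
    (hd : 3 ≤ d) (hk : 0 ≤ k) (hkv : k ≤ v) (h : c * a = b ^ d * v) : k * b ^ 2 ≤ c := by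
  have ha₀ : 0 < a := zero_lt_one.trans_le ha
  have hb : 1 ≤ b := ha.trans hab
  refine le_of_mul_le_mul_right ?_ ha₀
  calc k * b ^ 2 * a ≤ k * b ^ 2 * b := by gcongr
    _ = b ^ 3 * k := by ring
    _ ≤ b ^ d * v := by gcongr
    _ = c * a := h.symm

variable {x : ℕ → R} {F : R → R} {d : ℕ} {k : R}

theorem one_le_and_le_succ_of_recurrence (hx0 : x 0 = 1) (hx1 : x 1 = 1) (hd : 3 ≤ d)
    (hk : 1 ≤ k) (hF : ∀ t, 1 ≤ t → k ≤ F t)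
    (hrec : ∀ n, x (n + 2) * x n = x (n + 1) ^ d * F (x (n + 1))) :
    ∀ n, 1 ≤ x n ∧ x n ≤ x (n + 1)
  | 0 => by simp [hx0, hx1]
  | n + 1 => by
    obtain ⟨h1, hmono⟩ := one_le_and_le_succ_of_recurrence hx0 hx1 hd hk hF hrec n
    have hb : 1 ≤ x (n + 1) := h1.trans hmono
    have hstep :=
      mul_sq_le_of_mul_eq_pow_mul h1 hmono hd (zero_le_one.trans hk) (hF _ hb) (hrec n)
    refine ⟨hb, ?_⟩
    calc x (n + 1) ≤ 1 * x (n + 1) ^ 2 := by rw [one_mul]; exact le_self_pow₀ hb two_ne_zero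
      _ ≤ k * x (n + 1) ^ 2 := by gcongr
      _ ≤ x (n + 2) := hstep

theorem mul_sq_le_of_recurrence (hx0 : x 0 = 1) (hx1 : x 1 = 1) (hd : 3 ≤ d) (hk : 1 ≤ k)
    (hF : ∀ t, 1 ≤ t → k ≤ F t)
    (hrec : ∀ n, x (n + 2) * x n = x (n + 1) ^ d * F (x (n + 1))) (n : ℕ) :
    k * x (n + 1) ^ 2 ≤ x (n + 2) :=
  have ⟨h1, hmono⟩ := one_le_and_le_succ_of_recurrence hx0 hx1 hd hk hF hrec n
  mul_sq_le_of_mul_eq_pow_mul h1 hmono hd (zero_le_one.trans hk) (hF _ (h1.trans hmono)) (hrec n)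

end Recurrence

theorem stmt10_general (d1 : ℕ) (hd1 : 3 ≤ d1) (G : Polynomial ℤ)
    (hGcoeff : ∀ i, 0 ≤ G.coeff i) (hG1 : 3 ≤ G.eval 1)
    (x : ℕ → ℚ) (hx0 : x 0 = 1) (hx1 : x 1 = 1)
    (hrec : ∀ n, x (n + 2) * x n
      = x (n + 1) ^ d1 * (G.map (Int.castRingHom ℚ)).eval (x (n + 1)))
    (z : ℕ → ℚ) (hz : ∀ n, 2 ≤ n → z n = x n / x (n - 1) ^ 2) :
    ∀ n, 2 ≤ n → 3 ≤ z n := by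
  set H := G.map (Int.castRingHom ℚ)
  have hH : ∀ t : ℚ, 1 ≤ t → 3 ≤ H.eval t := fun t ht ↦
    calc (3 : ℚ) ≤ H.eval 1 := by simpa [H, eval_one_map] using (Int.cast_le (R := ℚ)).2 hG1
      _ ≤ H.eval t := eval_le_eval_of_coeff_nonneg (fun i ↦ by simpa [H] using hGcoeff i)
          zero_le_one ht
  intro n hn
  obtain ⟨m, rfl⟩ : ∃ m, n = m + 2 := ⟨n - 2, by omega⟩
  have hx : 0 < x (m + 1) ^ 2 := by
    have := (one_le_and_le_succ_of_recurrence hx0 hx1 hd1 (by norm_num) hH hrec (m + 1)).1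
    positivity
  rw [hz _ hn, show m + 2 - 1 = m + 1 by omega, le_div_iff₀ hx]
  exact mul_sq_le_of_recurrence hx0 hx1 hd1 (by norm_num) hH hrec m

theorem stmt10 (d1 : ℕ) (hd1 : 3 ≤ d1) (G : Polynomial ℤ)
    (hGcoeff : ∀ i, 0 ≤ G.coeff i) (hG0 : G.eval 0 ≠ 0) (hG1 : 3 ≤ G.eval 1)
    (x : ℕ → ℚ) (hx0 : x 0 = 1) (hx1 : x 1 = 1)
    (hrec : ∀ n, x (n + 2) * x n
      = x (n + 1) ^ d1 * (G.map (Int.castRingHom ℚ)).eval (x (n + 1)))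
    (z : ℕ → ℚ) (hz : ∀ n, 2 ≤ n → z n = x n / x (n - 1) ^ 2) :
    ∀ n, 2 ≤ n → 3 ≤ z n :=
  stmt10_general d1 hd1 G hGcoeff hG1 x hx0 hx1 hrec z hz
end

section
/- For the sequence x_0 = x_1 = 1, x_{n+2} x_n = x_{n+1}^3 (2 x_{n+1} + 1), the terms begin 1, 1, 3, 189, 852910317, and all terms are integers with x_n^2 | x_{n+1}. -/
theorem stmt11 (x : ℕ → ℚ) (hx0 : x 0 = 1) (hx1 : x 1 = 1)
    (hrec : ∀ n, x (n + 2) * x n = x (n + 1) ^ 3 * (2 * x (n + 1) + 1)) :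
    x 2 = 3 ∧ x 3 = 189 ∧ x 4 = 852910317 ∧
    ∀ n, (∃ k : ℤ, x n = (k : ℚ)) ∧ ∃ t : ℤ, x (n + 1) = x n ^ 2 * (t : ℚ) := by
  have h2 : x 2 = 3 := by have := hrec 0; rw [hx0, hx1] at this; linarith
  have h3 : x 3 = 189 := by have := hrec 1; rw [hx1, h2] at this; linarith
  have h4 : x 4 = 852910317 := by have := hrec 2; rw [h2, h3] at this; linarith
  refine ⟨h2, h3, h4, ?_⟩
  have key : ∀ n, ∃ a t : ℤ, x n = (a : ℚ) ∧ x (n + 1) = (a : ℚ) ^ 2 * (t : ℚ)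
      ∧ 0 < a ∧ 0 < t := by
    intro n
    induction n with
    | zero => exact ⟨1, 1, by simp [hx0], by simp [hx1], one_pos, one_pos⟩
    | succ n ih =>
      obtain ⟨a, t, ha, ht, hapos, htpos⟩ := ih
      have hane : (a : ℚ) ≠ 0 := Int.cast_ne_zero.2 (ne_of_gt hapos)
      have h := hrec n
      rw [ha, ht] at h
      have hx2 : x (n + 2) = (a : ℚ) ^ 5 * (t : ℚ) ^ 3 * (2 * (a : ℚ) ^ 2 * t + 1) := by
        have h5 : x (n + 2) * (a : ℚ) =
            ((a : ℚ) ^ 5 * (t : ℚ) ^ 3 * (2 * (a : ℚ) ^ 2 * t + 1)) * (a : ℚ) := by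
          rw [h]; ring
        exact mul_right_cancel₀ hane h5
      refine ⟨a ^ 2 * t, a * t * (2 * a ^ 2 * t + 1), by push_cast [ht]; ring, ?_, ?_, ?_⟩
      · push_cast
        rw [hx2]; ring
      · positivity
      · positivity
  intro n
  obtain ⟨a, t, ha, ht, _, _⟩ := key n
  exact ⟨⟨a, ha⟩, ⟨t, by rw [ht, ha]⟩⟩
end

section
/- If (x_n) is an increasing sequence of positive integers with x_{n+1} > x_n^{μ} for all n ≥ N where μ > 2, then for any ε' > 0 and all sufficiently large n, the tail satisfies ∑_{j=n+1}^∞ 1/x_j < 1/x_n^{μ − ε'}. -/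
theorem stmt13 (x : ℕ → ℕ) (hpos : ∀ n, 0 < x n) (hmono : StrictMono x)
    (h2 : ∀ᶠ n in Filter.atTop, 2 ≤ x n)
    (μ : ℝ) (hμ : 2 < μ) (N : ℕ)
    (hgrow : ∀ n, N ≤ n → (x n : ℝ) ^ μ < x (n + 1)) :
    ∀ ε' : ℝ, 0 < ε' →
      ∀ᶠ n in Filter.atTop,
        (∑' j : ℕ, (1 : ℝ) / x (n + 1 + j)) < 1 / (x n : ℝ) ^ (μ - ε') := by
  intro ε' hε'
  obtain ⟨N2, hN2⟩ := Filter.eventually_atTop.mp h2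
  set K : ℕ := ⌈(2:ℝ) ^ (1/ε')⌉₊ + 1 with hKdef
  filter_upwards [Filter.eventually_ge_atTop (max N (max N2 K))] with n hn
  have hN : N ≤ n := le_trans (le_max_left _ _) hn
  have hN2n : N2 ≤ n := le_trans (le_trans (le_max_left _ _) (le_max_right _ _)) hn
  have hKn : K ≤ n := le_trans (le_trans (le_max_right _ _) (le_max_right _ _)) hn
  have hxn2 : ∀ m, n ≤ m → 2 ≤ x m := fun m hm => hN2 m (le_trans hN2n hm)
  have hxpos : ∀ m, (0:ℝ) < x m := fun m => by exact_mod_cast hpos m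
  -- key growth: x (n+1+j) ≥ 2^j * x (n+1)
  have key : ∀ j : ℕ, (2:ℝ)^j * x (n+1) ≤ x (n+1+j) := by
    intro j
    induction j with
    | zero => simp
    | succ j ih =>
      have hge : N ≤ n + 1 + j := by omega
      have h1 : ((x (n+1+j) : ℝ)) ^ μ < x (n+1+j+1) := hgrow _ hge
      have h2x : (2:ℝ) ≤ x (n+1+j) := by exact_mod_cast hxn2 _ (by omega)
      have h1b : (1:ℝ) ≤ x (n+1+j) := le_trans one_le_two h2x
      have hsq : ((x (n+1+j) : ℝ)) ^ (2:ℝ) ≤ ((x (n+1+j) : ℝ)) ^ μ :=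
        Real.rpow_le_rpow_of_exponent_le h1b hμ.le
      have hsq2 : ((x (n+1+j) : ℝ)) ^ (2:ℝ) = (x (n+1+j) : ℝ) * x (n+1+j) := by
        rw [show (2:ℝ) = ((2:ℕ):ℝ) by norm_num, Real.rpow_natCast]; ring
      have h2m : (2:ℝ) * x (n+1+j) ≤ (x (n+1+j) : ℝ) * x (n+1+j) :=
        mul_le_mul_of_nonneg_right h2x (hxpos _).le
      have : (2:ℝ)^(j+1) * x (n+1) ≤ 2 * x (n+1+j) := by
        have := mul_le_mul_of_nonneg_left ih (by norm_num : (0:ℝ) ≤ 2)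
        calc (2:ℝ)^(j+1) * x (n+1) = 2 * ((2:ℝ)^j * x (n+1)) := by ring
          _ ≤ 2 * x (n+1+j) := this
      have : (2:ℝ)^(j+1) * x (n+1) < x (n+1+j+1) := by
        calc (2:ℝ)^(j+1) * x (n+1) ≤ 2 * x (n+1+j) := this
          _ ≤ (x (n+1+j) : ℝ) * x (n+1+j) := h2m
          _ = ((x (n+1+j) : ℝ)) ^ (2:ℝ) := hsq2.symm
          _ ≤ ((x (n+1+j) : ℝ)) ^ μ := hsq
          _ < x (n+1+j+1) := h1
      have heq : n + 1 + (j+1) = n + 1 + j + 1 := by omega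
      rw [heq]
      exact this.le
  -- bound each term by geometric
  have hterm : ∀ j : ℕ, (1:ℝ) / x (n+1+j) ≤ (1/2)^j * (1 / x (n+1)) := by
    intro j
    have hp : (0:ℝ) < (2:ℝ)^j * x (n+1) := mul_pos (by positivity) (hxpos _)
    have h := one_div_le_one_div_of_le hp (key j)
    have heq : (1/2:ℝ)^j * (1/(x (n+1):ℝ)) = 1/((2:ℝ)^j * x (n+1)) := by
      rw [div_pow, one_pow, div_mul_div_comm, one_mul]
    rw [heq]; exact h
  have hfnn : ∀ j : ℕ, (0:ℝ) ≤ 1 / x (n+1+j) := fun j => by positivity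
  have hsumg : Summable (fun j:ℕ => (1/2:ℝ)^j * (1/(x (n+1):ℝ))) :=
    (summable_geometric_of_lt_one (by norm_num) (by norm_num)).mul_right _
  have hsumf : Summable (fun j:ℕ => (1:ℝ) / x (n+1+j)) :=
    Summable.of_nonneg_of_le hfnn hterm hsumg
  have htsum : (∑' j : ℕ, (1:ℝ) / x (n+1+j)) ≤ 2 * (1/(x (n+1):ℝ)) := by
    have h1 := Summable.tsum_le_tsum hterm hsumf hsumg
    have h2 : (∑' j:ℕ, (1/2:ℝ)^j * (1/(x (n+1):ℝ)))
        = (∑' j:ℕ, (1/2:ℝ)^j) * (1/(x (n+1):ℝ)) := tsum_mul_right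
    have h3 : (∑' j:ℕ, (1/2:ℝ)^j) = 2 := by
      rw [tsum_geometric_of_lt_one (by norm_num) (by norm_num)]; norm_num
    rw [h2, h3] at h1
    exact h1
  -- 2 < (x n)^ε'
  have hxK : ((2:ℝ)) ^ (1/ε') < (x n : ℝ) := by
    have h1 : ((K:ℝ)) ≤ x n := by
      exact_mod_cast le_trans hKn (hmono.le_apply)
    have h2 : (2:ℝ)^(1/ε') < K := by
      have := Nat.le_ceil ((2:ℝ)^(1/ε'))
      have hK1 : (⌈(2:ℝ)^(1/ε')⌉₊ : ℝ) < K := by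
        rw [hKdef]; push_cast; linarith
      linarith
    linarith
  have h2lt : (2:ℝ) < (x n : ℝ) ^ ε' := by
    have h0 : (0:ℝ) ≤ (2:ℝ)^(1/ε') := (Real.rpow_pos_of_pos two_pos _).le
    have := Real.rpow_lt_rpow h0 hxK hε'
    calc (2:ℝ) = ((2:ℝ)^(1/ε'))^ε' := by
          rw [← Real.rpow_mul (by norm_num), one_div_mul_cancel hε'.ne', Real.rpow_one]
      _ < (x n : ℝ) ^ ε' := this
  -- final comparison
  have hA : (0:ℝ) < (x n : ℝ) ^ (μ - ε') := Real.rpow_pos_of_pos (hxpos n) _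
  have hfinal : 2 * (1/(x (n+1):ℝ)) < 1 / (x n : ℝ) ^ (μ - ε') := by
    rw [mul_one_div, div_lt_div_iff₀ (hxpos _) hA]
    calc 2 * (x n : ℝ) ^ (μ - ε') < (x n : ℝ) ^ ε' * (x n : ℝ) ^ (μ - ε') :=
          mul_lt_mul_of_pos_right h2lt hA
      _ = (x n : ℝ) ^ μ := by
          rw [← Real.rpow_add (hxpos n)]; ring_nf
      _ < x (n+1) := hgrow n hN
      _ = 1 * x (n+1) := (one_mul _).symm
  linarith
end

section
/- Let e_1 ≥ 1, e_2 ≥ 2 be integers and H(X,Y) a polynomial in two variables with non-negative integer coefficients, not divisible by X or Y. Then the sequence defined by X_0 = X_1 = X_2 = 1 and X_{n+3} X_n = X_{n+1}^{e_1} X_{n+2}^{e_2} H(X_{n+1}, X_{n+2}) consists of positive integers with X_n^2 | X_{n+1} for all n ≥ 0. -/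
theorem auxMul14 (x y : ℤ) (hx : 1 ≤ x) (hy : 1 ≤ y) : 1 ≤ x * y := by nlinarith

theorem auxHval14 (H : MvPolynomial (Fin 2) ℤ) (hH : ∀ m, 0 ≤ MvPolynomial.coeff m H)
    (hne : H ≠ 0) (a b : ℤ) (ha : 1 ≤ a) (hb : 1 ≤ b) :
    ∃ h : ℤ, 1 ≤ h ∧ MvPolynomial.aeval ![(a:ℚ),(b:ℚ)] H = (h:ℚ) := by
  refine ⟨MvPolynomial.eval ![a,b] H, ?_, ?_⟩
  · rw [MvPolynomial.eval_eq]
    have hsupp : H.support.Nonempty := MvPolynomial.support_nonempty.mpr hne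
    have key : ∀ d ∈ H.support,
        1 ≤ MvPolynomial.coeff d H * ∏ i ∈ d.support, (![a,b] i) ^ d i := by
      intro d hd
      have h1 : 1 ≤ MvPolynomial.coeff d H :=
        lt_of_le_of_ne (hH d) (Ne.symm (MvPolynomial.mem_support_iff.mp hd))
      have h2 : 1 ≤ ∏ i ∈ d.support, (![a,b] i) ^ d i := by
        have := Finset.prod_le_prod (s := d.support) (f := fun _ => (1:ℤ))
          (g := fun i => (![a,b] i) ^ d i) (by intros; norm_num)
          (by intro i _; apply one_le_pow₀; fin_cases i <;> simpa)
        simpa using this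
      nlinarith
    calc (1:ℤ) ≤ ∑ d ∈ H.support, 1 := by simpa using hsupp.card_pos
      _ ≤ _ := Finset.sum_le_sum key
  · have h : ((MvPolynomial.eval₂ (RingHom.id ℤ) ![a,b] H : ℤ) : ℚ)
        = MvPolynomial.eval₂ ((Int.castRingHom ℚ).comp (RingHom.id ℤ))
            ((Int.castRingHom ℚ) ∘ ![a,b]) H :=
      MvPolynomial.eval₂_comp_left (Int.castRingHom ℚ) (RingHom.id ℤ) ![a,b] H
    rw [MvPolynomial.aeval_def, MvPolynomial.eval]
    simp only [MvPolynomial.coe_eval₂Hom]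
    rw [h]
    congr 1
    funext i; fin_cases i <;> simp

theorem stmt14 (e1 e2 : ℕ) (he1 : 1 ≤ e1) (he2 : 2 ≤ e2)
    (H : MvPolynomial (Fin 2) ℤ) (hH : ∀ m, 0 ≤ MvPolynomial.coeff m H)
    (hHX : ¬ (MvPolynomial.X 0 ∣ H)) (hHY : ¬ (MvPolynomial.X 1 ∣ H))
    (X : ℕ → ℚ) (h0 : X 0 = 1) (h1 : X 1 = 1) (h2 : X 2 = 1)
    (hrec : ∀ n, X (n + 3) * X n
      = X (n + 1) ^ e1 * X (n + 2) ^ e2 * MvPolynomial.aeval ![X (n + 1), X (n + 2)] H) :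
    ∀ n, (∃ k : ℤ, 0 < k ∧ X n = (k : ℚ)) ∧ ∃ t : ℤ, X (n + 1) = X n ^ 2 * (t : ℚ) := by
  have hne : H ≠ 0 := fun h => hHX (h ▸ dvd_zero _)
  obtain ⟨f1, rfl⟩ : ∃ f1, e1 = 1 + f1 := ⟨e1 - 1, by omega⟩
  obtain ⟨f2, rfl⟩ : ∃ f2, e2 = 2 + f2 := ⟨e2 - 2, by omega⟩
  -- strengthened invariant
  set B : ℕ → Prop := fun n => ∃ a b : ℤ, 1 ≤ a ∧ 1 ≤ b ∧
    X n = (a : ℚ) ∧ X (n + 1) = (a : ℚ) ^ 2 * (b : ℚ) with hB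
  have hBall : ∀ n, B n ∧ B (n + 1) := by
    intro n
    induction n with
    | zero =>
      constructor
      · exact ⟨1, 1, le_refl 1, le_refl 1, by simp [h0], by simp [h0, h1]⟩
      · exact ⟨1, 1, le_refl 1, le_refl 1, by simp [h1], by simp [h1, h2]⟩
    | succ n ih =>
      obtain ⟨⟨a, b, ha, hb, hXn, hXn1⟩, ⟨a', b', ha', hb', hXn1', hXn2⟩⟩ := ih
      refine ⟨⟨a', b', ha', hb', hXn1', hXn2⟩, ?_⟩
      -- build B (n+2) from hrec n
      have hab : (1:ℤ) ≤ a ^ 2 * b := by nlinarith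
      have hab' : (1:ℤ) ≤ a' ^ 2 * b' := by nlinarith
      obtain ⟨h, hh1, hhval⟩ := auxHval14 H hH hne (a ^ 2 * b) (a' ^ 2 * b') hab hab'
      have hXn1c : X (n + 1) = ((a ^ 2 * b : ℤ) : ℚ) := by push_cast; exact hXn1
      have hXn2c : X (n + 2) = ((a' ^ 2 * b' : ℤ) : ℚ) := by push_cast; exact hXn2
      refine ⟨a' ^ 2 * b', a ^ (1 + 2 * f1) * b ^ (1 + f1) * a' ^ (2 * f2) * b' ^ f2 * h,
        hab', ?_, by push_cast; exact hXn2, ?_⟩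
      · have q1 : (1:ℤ) ≤ a ^ (1 + 2 * f1) := one_le_pow₀ ha
        have q2 : (1:ℤ) ≤ b ^ (1 + f1) := one_le_pow₀ hb
        have q3 : (1:ℤ) ≤ a' ^ (2 * f2) := one_le_pow₀ ha'
        have q4 : (1:ℤ) ≤ b' ^ f2 := one_le_pow₀ hb'
        have q5 : (1:ℤ) ≤ a ^ (1 + 2 * f1) * b ^ (1 + f1) := auxMul14 _ _ q1 q2
        have q6 : (1:ℤ) ≤ a ^ (1 + 2 * f1) * b ^ (1 + f1) * a' ^ (2 * f2) :=
          auxMul14 _ _ q5 q3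
        have q7 : (1:ℤ) ≤ a ^ (1 + 2 * f1) * b ^ (1 + f1) * a' ^ (2 * f2) * b' ^ f2 :=
          auxMul14 _ _ q6 q4
        exact auxMul14 _ _ q7 hh1
      · have hr := hrec n
        rw [hXn, hXn1c, hXn2c, hhval] at hr
        have han : (a : ℚ) ≠ 0 := by positivity
        have key : X (n + 2 + 1) * (a : ℚ)
            = (((a' ^ 2 * b' : ℤ) : ℚ)) ^ 2
              * ((a : ℚ) ^ (1 + 2 * f1) * (b : ℚ) ^ (1 + f1)
                * (a' : ℚ) ^ (2 * f2) * (b' : ℚ) ^ f2 * (h : ℚ)) * (a : ℚ) := by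
          show X (n + 3) * (a : ℚ) = _
          rw [hr]; push_cast; ring
        have := mul_right_cancel₀ han key
        rw [this]; push_cast; ring
  intro n
  obtain ⟨⟨a, b, ha, hb, hXn, hXn1⟩, _⟩ := hBall n
  constructor
  · exact ⟨a, by omega, hXn⟩
  · exact ⟨b, by rw [hXn1, hXn]⟩
end

section
/- If (x_n) satisfies x_{n+2} x_n = x_{n+1}^{d_1} G(x_{n+1}) with x_0 = x_1 = 1 and x_n = X_n X_{n+1} for a sequence (X_n) with X_0 = X_1 = 1, then (X_n) satisfies X_{n+3} X_n = (X_{n+1} X_{n+2})^{d_1 − 1} G(X_{n+1} X_{n+2}). -/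
theorem stmt15 (d1 : ℕ) (hd1 : 3 ≤ d1) (G : Polynomial ℤ)
    (x X : ℕ → ℚ) (hx0 : x 0 = 1) (hx1 : x 1 = 1)
    (hX0 : X 0 = 1) (hX1 : X 1 = 1) (hXne : ∀ n, X n ≠ 0)
    (hrec : ∀ n, x (n + 2) * x n
      = x (n + 1) ^ d1 * (G.map (Int.castRingHom ℚ)).eval (x (n + 1)))
    (hfac : ∀ n, x n = X n * X (n + 1)) :
    ∀ n, X (n + 3) * X n
      = (X (n + 1) * X (n + 2)) ^ (d1 - 1)
        * (G.map (Int.castRingHom ℚ)).eval (X (n + 1) * X (n + 2)) := by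
  intro n
  have h := hrec n
  simp only [hfac, show n+1+1 = n+2 from rfl, show n+2+1 = n+3 from rfl] at h
  have h1 := hXne (n+1); have h2 := hXne (n+2)
  have hd : d1 - 1 + 1 = d1 := by omega
  have hp : (X (n+1) * X (n+2)) ^ d1
      = (X (n+1) * X (n+2)) ^ (d1 - 1) * (X (n+1) * X (n+2)) := by
    rw [← pow_succ, hd]
  rw [hp] at h
  apply mul_left_cancel₀ (mul_ne_zero h1 h2)
  linear_combination h
end

section
/- For the sequence X_0 = X_1 = X_2 = 1, X_{n+3} X_n = X_{n+1}^2 X_{n+2}^2 (2 X_{n+1} X_{n+2} + 1), the terms begin 1, 1, 1, 3, 63, 13538259, and all terms are positive integers with X_n^2 | X_{n+1}. -/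
theorem stmt16 (X : ℕ → ℚ) (h0 : X 0 = 1) (h1 : X 1 = 1) (h2 : X 2 = 1)
    (hrec : ∀ n, X (n + 3) * X n
      = X (n + 1) ^ 2 * X (n + 2) ^ 2 * (2 * X (n + 1) * X (n + 2) + 1)) :
    X 3 = 3 ∧ X 4 = 63 ∧ X 5 = 13538259 ∧
    ∀ n, (∃ k : ℤ, 0 < k ∧ X n = (k : ℚ)) ∧ ∃ t : ℤ, X (n + 1) = X n ^ 2 * (t : ℚ) := by
  have key : ∀ n, ∃ k l m t s : ℤ, 0 < k ∧ 0 < l ∧ 0 < m ∧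
      X n = (k : ℚ) ∧ X (n+1) = (l : ℚ) ∧ X (n+2) = (m : ℚ) ∧
      l = k^2 * t ∧ m = l^2 * s := by
    intro n
    induction n with
    | zero =>
      exact ⟨1, 1, 1, 1, 1, one_pos, one_pos, one_pos, by simpa using h0,
        by simpa using h1, by simpa using h2, by ring, by ring⟩
    | succ n ih =>
      obtain ⟨k, l, m, t, s, hk, hl, hm, hXk, hXl, hXm, hlt, hms⟩ := ih
      have hk0 : (k : ℚ) ≠ 0 := by exact_mod_cast hk.ne'
      have ht : 0 < t := by nlinarith [sq_nonneg k]
      have e := hrec n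
      rw [hXk, hXl, hXm] at e
      have hX3 : X (n + 3) = ((m^2 * (k^3 * t^2 * (2*l*m+1)) : ℤ) : ℚ) := by
        have hlq : (l : ℚ) = (k : ℚ)^2 * (t : ℚ) := by exact_mod_cast hlt
        apply mul_right_cancel₀ hk0
        rw [e, hlq]
        push_cast
        rw [hlq]
        ring
      have hm' : 0 < m^2 * (k^3 * t^2 * (2*l*m+1)) := by positivity
      refine ⟨l, m, m^2 * (k^3 * t^2 * (2*l*m+1)), s, k^3 * t^2 * (2*l*m+1),
        hl, hm, hm', hXl, hXm, ?_, hms, by ring⟩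
      show X (n + 1 + 2) = _
      rw [show n + 1 + 2 = n + 3 from rfl, hX3]
  have e0 := hrec 0
  rw [h0, h1, h2] at e0
  have hX3 : X 3 = 3 := by linarith
  have e1 := hrec 1
  rw [h1, h2, hX3] at e1
  have hX4 : X 4 = 63 := by linarith
  have e2 := hrec 2
  rw [h2, hX3, hX4] at e2
  have hX5 : X 5 = 13538259 := by linarith
  refine ⟨hX3, hX4, hX5, fun n => ?_⟩
  obtain ⟨k, l, m, t, s, hk, hl, hm, hXk, hXl, hXm, hlt, hms⟩ := key n
  refine ⟨⟨k, hk, hXk⟩, t, ?_⟩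
  rw [hXl, hXk, hlt]
  push_cast
  ring
end
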